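/- Let H(x,y) = y²/2 + x²/2 + x⁴/4. Then x⁴ y dx = (4/7·H − 8/7·x²)·y dx + (6/7)·x y dH − d((2/7)·x y³) as polynomial 1-forms on ℝ². -/

import Mathlib

/-- partial derivative in the first variable -/
noncomputable def pdx (F : ℝ → ℝ → ℝ) (x y : ℝ) : ℝ := deriv (fun t => F t y) x

/-- partial derivative in the second variable -/
noncomputable def pdy (F : ℝ → ℝ → ℝ) (x y : ℝ) : ℝ := deriv (fun t => F x t) y

noncomputable def H (x y : ℝ) : ℝ := y^2/2 + x^2/2 + x^4/4

theorem pdx_H (x y : ℝ) : pdx H x y = x + x ^ 3 := by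
  have h : HasDerivAt (fun t => y ^ 2 / 2 + t ^ 2 / 2 + t ^ 4 / 4)
      (0 + ↑2 * x ^ (2 - 1) / 2 + ↑4 * x ^ (4 - 1) / 4) x :=
    ((hasDerivAt_const x _).add ((hasDerivAt_pow 2 x).div_const 2)).add
      ((hasDerivAt_pow 4 x).div_const 4)
  unfold pdx H
  rw [h.deriv]
  norm_num

theorem pdy_H (x y : ℝ) : pdy H x y = y := by
  have h : HasDerivAt (fun t => t ^ 2 / 2 + x ^ 2 / 2 + x ^ 4 / 4)
      (↑2 * y ^ (2 - 1) / 2 + 0 + 0) y :=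
    (((hasDerivAt_pow 2 y).div_const 2).add (hasDerivAt_const y _)).add (hasDerivAt_const y _)
  unfold pdy H
  rw [h.deriv]
  norm_num

theorem pdx_const_mul_mul_pow (c : ℝ) (n : ℕ) (x y : ℝ) :
    pdx (fun x y => c * x * y ^ n) x y = c * y ^ n := by
  have h : HasDerivAt (fun t => c * t * y ^ n) (c * 1 * y ^ n) x :=
    ((hasDerivAt_id x).const_mul c).mul_const (y ^ n)
  rw [pdx, h.deriv, mul_one]

theorem pdy_const_mul_mul_pow (c : ℝ) (n : ℕ) (x y : ℝ) :
    pdy (fun x y => c * x * y ^ n) x y = c * x * (n * y ^ (n - 1)) :=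
  ((hasDerivAt_pow n y).const_mul (c * x)).deriv

/-- (i2):  x⁴y dx = (4/7·H − 8/7·x²)·y dx + (6/7)·xy·dH − d((2/7)·xy³) -/
theorem decomposition_i2 : ∀ x y : ℝ,
    x^4 * y = (4/7 * H x y - 8/7 * x^2) * y + 6/7 * (x*y) * pdx H x y
      - pdx (fun x y => 2/7 * x * y^3) x y
  ∧ (0 : ℝ) = 6/7 * (x*y) * pdy H x y - pdy (fun x y => 2/7 * x * y^3) x y := by
  intro x y
  rw [pdx_H, pdy_H, pdx_const_mul_mul_pow, pdy_const_mul_mul_pow, H]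
  constructor <;> push_cast <;> ring
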